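/- arXiv:1607.03236 — 3 statements merged into one kernel-verified Lean document; each statement's English description precedes it below -/
import Mathlib

section
/- Let Π and Δ be orthogonal projections on ℂ^D, let ρ be a density matrix on ℂ^D satisfying Δ ρ Δ = ρ, and let N ≥ 1 be an integer. Define the acceptance probability p_acc := 1 − tr( (Δ(I−Π))^N ρ ((I−Π)Δ)^N ), let A := ΔΠΔ, and let P denote the orthogonal projection onto the span of the eigenvectors of A with eigenvalue at least 1/(2N). Then (1 − e^{−1}) · tr(P ρ) ≤ p_acc ≤ 2N · tr(A ρ). -/
open Matrix
open scoped ComplexOrder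

/-- The orthogonal projection onto the span of the eigenvectors of a Hermitian matrix `A`
with eigenvalue at least `δ`. -/
noncomputable def specProj {d : ℕ} {A : Matrix (Fin d) (Fin d) ℂ} (hA : A.IsHermitian)
    (δ : ℝ) : Matrix (Fin d) (Fin d) ℂ :=
  (hA.eigenvectorUnitary : Matrix (Fin d) (Fin d) ℂ) *
    Matrix.diagonal (fun i => if δ ≤ hA.eigenvalues i then (1 : ℂ) else 0) *
    (hA.eigenvectorUnitary : Matrix (Fin d) (Fin d) ℂ)ᴴ

/-!
Write `A = ΔΠΔ`. As `Δ` is idempotent, `Δ(1 - Π)Δ = Δ(1 - A) = (1 - A)Δ`, so with `ρ = ΔρΔ` the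
alternating products collapse: `tr((Δ(1 - Π))^N ρ ((1 - Π)Δ)^N) = tr((1 - A)^(2N) ρ)`.
Since `0 ≤ A ≤ 1`, expanding `ρ` in an eigenbasis of `A` gives a probability vector `w` on the
eigenvalues `λᵢ ∈ [0, 1]` with `p_acc = ∑ᵢ (1 - (1 - λᵢ)^(2N)) wᵢ`. Both bounds then hold term by
term: Bernoulli's inequality gives `1 - (1 - λ)^(2N) ≤ 2Nλ`, and `(1 - λ)^(2N) ≤ e^(-2Nλ) ≤ e⁻¹`
as soon as `λ ≥ 1/(2N)`.
-/

namespace IsIdempotentElem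

variable {R : Type*} [Ring R] {d : R}

lemma mul_mul_mul_self (hd : IsIdempotentElem d) (p : R) : d * (d * p * d) = d * p * d := by
  rw [← mul_assoc, ← mul_assoc, hd.eq]

lemma mul_mul_self_mul (hd : IsIdempotentElem d) (p : R) : d * p * d * d = d * p * d := by
  rw [mul_assoc _ d d, hd.eq]

lemma commute_one_sub_mul_mul (hd : IsIdempotentElem d) (p : R) : Commute d (1 - d * p * d) := by
  simp only [Commute, SemiconjBy, mul_sub, sub_mul, mul_one, one_mul, hd.mul_mul_mul_self,
    hd.mul_mul_self_mul]

lemma semiconjBy_mul_one_sub (hd : IsIdempotentElem d) (p : R) :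
    SemiconjBy d (1 - d * p * d) (d * (1 - p)) := by
  simp only [SemiconjBy, mul_sub, sub_mul, mul_one, hd.mul_mul_mul_self, hd.eq]

lemma semiconjBy_one_sub_mul (hd : IsIdempotentElem d) (p : R) :
    SemiconjBy d ((1 - p) * d) (1 - d * p * d) := by
  simp only [SemiconjBy, sub_mul, mul_sub, one_mul, ← mul_assoc, hd.eq, hd.mul_mul_self_mul]

lemma mul_one_sub_pow_mul_mul_pow {ρ : R} (hd : IsIdempotentElem d) (p : R)
    (hρ : d * ρ * d = ρ) (n : ℕ) :
    (d * (1 - p)) ^ n * ρ * ((1 - p) * d) ^ n = (1 - d * p * d) ^ n * ρ * (1 - d * p * d) ^ n := by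
  calc (d * (1 - p)) ^ n * ρ * ((1 - p) * d) ^ n
      = ((d * (1 - p)) ^ n * d) * ρ * (d * ((1 - p) * d) ^ n) := by
        conv_lhs => rw [← hρ]
        simp only [mul_assoc]
    _ = (d * (1 - d * p * d) ^ n) * ρ * ((1 - d * p * d) ^ n * d) := by
        rw [((hd.semiconjBy_mul_one_sub p).pow_right n).eq,
          ((hd.semiconjBy_one_sub_mul p).pow_right n).eq]
    _ = ((1 - d * p * d) ^ n * d) * ρ * (d * (1 - d * p * d) ^ n) := by
        rw [((hd.commute_one_sub_mul_mul p).pow_right n).eq]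
    _ = (1 - d * p * d) ^ n * (d * ρ * d) * (1 - d * p * d) ^ n := by simp only [mul_assoc]
    _ = (1 - d * p * d) ^ n * ρ * (1 - d * p * d) ^ n := by rw [hρ]

end IsIdempotentElem

namespace Matrix

variable {n 𝕜 : Type*} [RCLike 𝕜] [Fintype n]

lemma PosSemidef.of_isHermitian_of_isIdempotentElem {P : Matrix n n 𝕜} (hP : P.IsHermitian)
    (hP2 : IsIdempotentElem P) : P.PosSemidef := by
  simpa [hP.eq, hP2.eq] using posSemidef_conjTranspose_mul_self P

variable [DecidableEq n]

lemma PosSemidef.one_sub_mul_mul {P Q : Matrix n n 𝕜} (hP : (1 - P).PosSemidef)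
    (hQ : Q.IsHermitian) (hQ2 : IsIdempotentElem Q) : (1 - Q * P * Q).PosSemidef := by
  have h1 : (1 - Q).PosSemidef :=
    .of_isHermitian_of_isIdempotentElem (isHermitian_one.sub hQ) hQ2.one_sub
  have h2 : (Q * (1 - P) * Q).PosSemidef := by
    simpa [hQ.eq] using hP.conjTranspose_mul_mul_same Q
  convert h1.add h2 using 1
  simp only [mul_sub, sub_mul, mul_one, hQ2.eq]
  abel

namespace IsHermitian

variable {A : Matrix n n 𝕜} (hA : A.IsHermitian)
include hA

lemma posSemidef_cfc_iff (f : ℝ → ℝ) :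
    (cfc f A).PosSemidef ↔ ∀ i, 0 ≤ f (hA.eigenvalues i) := by
  rw [hA.cfc_eq, IsHermitian.cfc, Unitary.conjStarAlgAut_apply,
    Unitary.isUnit_coe.posSemidef_star_right_conjugate_iff, posSemidef_diagonal_iff]
  simp

lemma cfc_one_sub_pow (k : ℕ) : cfc (fun x : ℝ ↦ (1 - x) ^ k) A = (1 - A) ^ k := by
  have : IsSelfAdjoint A := hA
  rw [cfc_pow (fun x : ℝ ↦ 1 - x) k A, cfc_sub (fun _ ↦ 1) (fun x ↦ x) A, cfc_const_one ℝ A,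
    cfc_id' ℝ A]

lemma eigenvalues_le_one (h : (1 - A).PosSemidef) (i : n) : hA.eigenvalues i ≤ 1 := by
  rw [← pow_one (1 - A), ← hA.cfc_one_sub_pow, hA.posSemidef_cfc_iff] at h
  simpa using h i

lemma re_trace_cfc_mul (f : ℝ → ℝ) (ρ : Matrix n n 𝕜) :
    RCLike.re (cfc f A * ρ).trace = ∑ i, f (hA.eigenvalues i) * RCLike.re
      ((star (hA.eigenvectorUnitary : Matrix n n 𝕜) * ρ * hA.eigenvectorUnitary) i i) := by
  rw [hA.cfc_eq, IsHermitian.cfc, Unitary.conjStarAlgAut_apply, mul_assoc (_ * _), trace_mul_comm,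
    ← mul_assoc]
  simp [trace, mul_diagonal, mul_comm]

lemma exists_spectral_weights {ρ : Matrix n n 𝕜} (hρ : ρ.PosSemidef) :
    ∃ w : n → ℝ, (∀ i, 0 ≤ w i) ∧ ∑ i, w i = RCLike.re ρ.trace ∧
      ∀ f : ℝ → ℝ, RCLike.re (cfc f A * ρ).trace = ∑ i, f (hA.eigenvalues i) * w i := by
  refine ⟨_, fun i ↦ ?_, ?_, fun f ↦ hA.re_trace_cfc_mul f ρ⟩
  · exact (RCLike.nonneg_iff.mp (hρ.conjTranspose_mul_mul_same _).diag_nonneg).1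
  · simpa [cfc_one ℝ A] using (hA.re_trace_cfc_mul 1 ρ).symm

end IsHermitian

end Matrix

lemma specProj_eq_cfc {d : ℕ} {A : Matrix (Fin d) (Fin d) ℂ} (hA : A.IsHermitian) (δ : ℝ) :
    specProj hA δ = cfc (fun x ↦ if δ ≤ x then 1 else 0) A := by
  rw [hA.cfc_eq, IsHermitian.cfc, Unitary.conjStarAlgAut_apply, specProj]
  congr
  ext i
  simp [apply_ite]

lemma Real.one_sub_pow_le_exp_neg_one {n : ℕ} {l : ℝ} (hl : 1 ≤ n * l) (h1 : l ≤ 1) :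
    (1 - l) ^ n ≤ Real.exp (-1) :=
  calc (1 - l) ^ n ≤ Real.exp (-l) ^ n :=
        pow_le_pow_left₀ (by linarith) (Real.one_sub_le_exp_neg l) n
    _ = Real.exp (-(n * l)) := by rw [← Real.exp_nat_mul, mul_neg]
    _ ≤ Real.exp (-1) := Real.exp_le_exp.mpr (by linarith)

lemma Real.one_sub_exp_neg_one_mul_ite_le {n : ℕ} {δ l : ℝ} (hδ : 1 ≤ n * δ) (h0 : 0 ≤ l)
    (h1 : l ≤ 1) : (1 - Real.exp (-1)) * (if δ ≤ l then 1 else 0) ≤ 1 - (1 - l) ^ n := by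
  split_ifs with hl
  · have : 1 ≤ n * l := hδ.trans (by gcongr)
    linarith [Real.one_sub_pow_le_exp_neg_one this h1]
  · simpa using pow_le_one₀ (sub_nonneg.mpr h1) (by linarith)

lemma one_sub_one_sub_pow_le (n : ℕ) {l : ℝ} (hl : l ≤ 2) : 1 - (1 - l) ^ n ≤ n * l := by
  have := one_add_mul_le_pow (a := -l) (by linarith) n
  rw [← sub_eq_add_neg, mul_neg] at this
  linarith

/-- Theorem 5: performance of modified Marriott–Watrous amplification.
For orthogonal projections `Π` (here `Pj`) and `Δ` on `ℂ^D`, a density matrix `ρ` with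
`ΔρΔ = ρ`, and `N ≥ 1`, the acceptance probability
`p_acc = 1 − tr((Δ(I−Π))^N ρ ((I−Π)Δ)^N)` satisfies
`(1 − e⁻¹)·tr(P ρ) ≤ p_acc ≤ 2N·tr(ΔΠΔ ρ)`, where `P` projects onto the eigenvectors of
`A = ΔΠΔ` with eigenvalue at least `1/(2N)`. -/
theorem stmt_0 {D : ℕ} (Pj Δ ρ : Matrix (Fin D) (Fin D) ℂ)
    (hPjH : Pj.IsHermitian) (hPj2 : Pj * Pj = Pj)
    (hΔH : Δ.IsHermitian) (hΔ2 : Δ * Δ = Δ)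
    (hρ : ρ.PosSemidef) (hρtr : ρ.trace = 1) (hρΔ : Δ * ρ * Δ = ρ)
    (N : ℕ) (hN : 1 ≤ N)
    (hA : (Δ * Pj * Δ).IsHermitian)
    (p_acc : ℝ)
    (hp : p_acc = 1 - ((((Δ * (1 - Pj)) ^ N) * ρ * (((1 - Pj) * Δ) ^ N)).trace).re) :
    (1 - Real.exp (-1)) * ((specProj hA (1 / (2 * N)) * ρ).trace).re ≤ p_acc ∧
      p_acc ≤ 2 * N * (((Δ * Pj * Δ) * ρ).trace).re := by
  have hPj : Pj.PosSemidef := .of_isHermitian_of_isIdempotentElem hPjH hPj2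
  have hA0 : (Δ * Pj * Δ).PosSemidef := by simpa [hΔH.eq] using hPj.conjTranspose_mul_mul_same Δ
  have hA1 : (1 - Δ * Pj * Δ).PosSemidef :=
    (PosSemidef.of_isHermitian_of_isIdempotentElem (isHermitian_one.sub hPjH)
      (IsIdempotentElem.one_sub hPj2)).one_sub_mul_mul hΔH hΔ2
  obtain ⟨w, hw0, hw1, hwf⟩ := hA.exists_spectral_weights hρ
  simp only [RCLike.re_to_complex, hρtr, Complex.one_re] at hw1 hwf
  have hp' : p_acc = ∑ i, (1 - (1 - hA.eigenvalues i) ^ (2 * N)) * w i := by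
    rw [hp, IsIdempotentElem.mul_one_sub_pow_mul_mul_pow hΔ2 Pj hρΔ, trace_mul_cycle, ← pow_add,
      ← two_mul, ← hA.cfc_one_sub_pow, hwf]
    simp only [sub_mul, one_mul, Finset.sum_sub_distrib, hw1]
  have hδ : 1 ≤ ((2 * N : ℕ) : ℝ) * (1 / (2 * N)) := by
    have : (0 : ℝ) < N := by exact_mod_cast hN
    field_simp
    norm_num
  constructor
  · rw [specProj_eq_cfc, hwf, hp', Finset.mul_sum]
    simp_rw [← mul_assoc]
    refine Finset.sum_le_sum fun i _ ↦ mul_le_mul_of_nonneg_right ?_ (hw0 i)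
    exact Real.one_sub_exp_neg_one_mul_ite_le hδ (hA0.eigenvalues_nonneg i)
      (hA.eigenvalues_le_one hA1 i)
  · rw [← cfc_id' ℝ (Δ * Pj * Δ), hwf, hp', Finset.mul_sum]
    simp_rw [← mul_assoc]
    refine Finset.sum_le_sum fun i _ ↦ mul_le_mul_of_nonneg_right ?_ (hw0 i)
    have h1 := hA.eigenvalues_le_one hA1 i
    exact_mod_cast one_sub_one_sub_pow_le (2 * N) (l := hA.eigenvalues i) (by linarith)
end

section
/- (Gentle measurement / almost-as-good-as-new lemma.) Let ρ be a density matrix on ℂ^d and let Λ be a measurement operator (a Hermitian matrix with 0 ≤ Λ ≤ I) such that tr(Λρ) > 0. Then the trace distance between ρ and the post-measurement state √Λ ρ √Λ / tr(Λρ) satisfies ‖ ρ − √Λ ρ √Λ / tr(Λρ) ‖_tr ≤ √( tr((I−Λ)ρ) ). -/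
open Matrix
open scoped ComplexOrder

/-- The positive semidefinite square root of a positive semidefinite matrix
(the definition `Matrix.PosSemidef.sqrt` of the older Mathlib, removed since). -/
noncomputable def Matrix.PosSemidef.sqrt {n 𝕜 : Type*} [Fintype n] [DecidableEq n] [RCLike 𝕜]
    {A : Matrix n n 𝕜} (hA : A.PosSemidef) : Matrix n n 𝕜 :=
  hA.1.eigenvectorUnitary.1 * diagonal ((↑) ∘ (√·) ∘ hA.1.eigenvalues) *
  (star hA.1.eigenvectorUnitary : Matrix n n 𝕜)

/-- The trace distance `‖ρ − σ‖_tr = (1/2)·tr|ρ − σ|`, where `|M| = √(Mᴴ M)`. -/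
noncomputable def traceDist {d : ℕ} (ρ σ : Matrix (Fin d) (Fin d) ℂ) : ℝ :=
  (1 / 2) * ((Matrix.posSemidef_conjTranspose_mul_self (ρ - σ)).sqrt.trace).re


/-!
Write `R = √ρ`, `X = √Λ` and `q = tr(Λρ)`. For the Hilbert–Schmidt inner product the matrices
`u = R` and `v = R X / √q` are unit vectors with `tr(P ρ) = ‖u P‖²` and `tr(P σ) = ‖v P‖²` for
every projection `P`, where `σ = X ρ X / q`: they purify `ρ` and `σ`. The trace distance of `ρ`
and `σ` is `tr(P (ρ - σ))` for the projection `P` onto the positive part of `ρ - σ`, and for unit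
vectors and an orthogonal projection `T` one has `‖T u‖² - ‖T v‖² ≤ √(1 - |⟪u, v⟫|²)`, the trace
distance of the pure states. Finally `⟪u, v⟫ = tr(X ρ) / √q ≥ tr(Λ ρ) / √q = √q`, because
`Λ ≤ √Λ` when `0 ≤ Λ ≤ 1`; hence `1 - |⟪u, v⟫|² ≤ 1 - q = tr((1 - Λ) ρ)`.
-/

open scoped InnerProductSpace MatrixOrder
open RCLike

lemma sq_sub_sq_sq_add_sq_le_one {x y x' y' c : ℝ} (hx : x ^ 2 + x' ^ 2 = 1)
    (hy : y ^ 2 + y' ^ 2 = 1) (hc : 0 ≤ c) (hcxy : c ≤ x * y + x' * y') :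
    (x ^ 2 - y ^ 2) ^ 2 + c ^ 2 ≤ 1 := by
  have hcross : (x * y' + x' * y) ^ 2 ≤ 1 := by nlinarith [sq_nonneg (x * y - x' * y')]
  have hlagrange : 1 - (x * y + x' * y') ^ 2 = (x * y' - x' * y) ^ 2 := by
    linear_combination (-(y ^ 2 + y' ^ 2)) * hx - hy
  have hfactor : x ^ 2 - y ^ 2 = (x * y' - x' * y) * (x * y' + x' * y) := by
    linear_combination y ^ 2 * hx - x ^ 2 * hy
  calc (x ^ 2 - y ^ 2) ^ 2 + c ^ 2
      = (x * y' - x' * y) ^ 2 * (x * y' + x' * y) ^ 2 + c ^ 2 := by rw [hfactor, mul_pow]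
    _ ≤ (x * y' - x' * y) ^ 2 * 1 + (x * y + x' * y') ^ 2 :=
      add_le_add (mul_le_mul_of_nonneg_left hcross (sq_nonneg _)) (pow_le_pow_left₀ hc hcxy 2)
    _ = 1 := by rw [mul_one, ← hlagrange]; ring

namespace LinearMap.IsSymmetricProjection

variable {𝕜 E : Type*} [RCLike 𝕜] [SeminormedAddCommGroup E] [InnerProductSpace 𝕜 E]
  {T : E →ₗ[𝕜] E}

theorem inner_map_map (hT : T.IsSymmetricProjection) (u v : E) :
    ⟪T u, T v⟫_𝕜 = ⟪u, T v⟫_𝕜 := by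
  rw [hT.isSymmetric, ← Module.End.mul_apply, hT.isIdempotentElem.eq]

theorem one_sub (hT : T.IsSymmetricProjection) : (1 - T).IsSymmetricProjection :=
  ⟨hT.isIdempotentElem.one_sub, LinearMap.IsSymmetric.one.sub hT.isSymmetric⟩

theorem inner_eq_add (hT : T.IsSymmetricProjection) (u v : E) :
    ⟪u, v⟫_𝕜 = ⟪T u, T v⟫_𝕜 + ⟪(1 - T) u, (1 - T) v⟫_𝕜 := by
  rw [hT.inner_map_map, hT.one_sub.inner_map_map, ← inner_add_right]
  simp

theorem norm_sq_eq_add (hT : T.IsSymmetricProjection) (u : E) :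
    ‖u‖ ^ 2 = ‖T u‖ ^ 2 + ‖(1 - T) u‖ ^ 2 := by
  have h := congrArg re (hT.inner_eq_add u u)
  simpa only [inner_self_eq_norm_sq, map_add] using h

/-- The trace distance `√(1 - |⟪u, v⟫|²)` of the pure states `u` and `v` bounds the difference
of their probabilities for the outcome `T`. -/
theorem norm_map_sq_sub_le_sqrt (hT : T.IsSymmetricProjection) {u v : E} (hu : ‖u‖ = 1)
    (hv : ‖v‖ = 1) : ‖T u‖ ^ 2 - ‖T v‖ ^ 2 ≤ √(1 - ‖⟪u, v⟫_𝕜‖ ^ 2) := by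
  have hunit (w : E) (hw : ‖w‖ = 1) : ‖T w‖ ^ 2 + ‖(1 - T) w‖ ^ 2 = 1 := by
    rw [← hT.norm_sq_eq_add, hw, one_pow]
  have hinner : ‖⟪u, v⟫_𝕜‖ ≤ ‖T u‖ * ‖T v‖ + ‖(1 - T) u‖ * ‖(1 - T) v‖ := by
    rw [hT.inner_eq_add]
    exact (norm_add_le _ _).trans (add_le_add (norm_inner_le_norm _ _) (norm_inner_le_norm _ _))
  have h := sq_sub_sq_sq_add_sq_le_one (hunit u hu) (hunit v hv) (norm_nonneg _) hinner
  exact (le_abs_self _).trans (Real.abs_le_sqrt (by linarith))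

end LinearMap.IsSymmetricProjection

lemma CFC.le_sqrt_of_le_one {A : Type*} [PartialOrder A] [Ring A] [StarRing A]
    [TopologicalSpace A] [StarOrderedRing A] [Algebra ℝ A]
    [ContinuousFunctionalCalculus ℝ A IsSelfAdjoint] [NonnegSpectrumClass ℝ A]
    [IsSemitopologicalRing A] [T2Space A] {a : A} (ha₀ : 0 ≤ a) (ha₁ : a ≤ 1) :
    a ≤ CFC.sqrt a := by
  rw [CFC.sqrt_eq_real_sqrt a, cfcₙ_eq_cfc]
  nth_rw 1 [← cfc_id' ℝ a]
  refine cfc_mono fun x hx => ?_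
  have hx₀ : 0 ≤ x := spectrum_nonneg_of_nonneg ha₀ hx
  have hx₁ : x ≤ 1 := (CFC.le_one_iff a).mp ha₁ x hx
  exact (Real.le_sqrt hx₀ hx₀).mpr (by nlinarith)

namespace Matrix

variable {n 𝕜 : Type*} [Fintype n] [RCLike 𝕜]

noncomputable def postMeasurement (K ρ : Matrix n n 𝕜) : Matrix n n 𝕜 :=
  (K * ρ * Kᴴ).trace⁻¹ • (K * ρ * Kᴴ)

lemma trace_postMeasurement {K ρ : Matrix n n 𝕜} (hK : (K * ρ * Kᴴ).trace ≠ 0) :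
    (postMeasurement K ρ).trace = 1 := by
  rw [postMeasurement, trace_smul, smul_eq_mul, inv_mul_cancel₀ hK]

lemma PosSemidef.trace_mul_mul_conjTranspose_eq_ofReal {ρ : Matrix n n 𝕜} (hρ : ρ.PosSemidef)
    (K : Matrix n n 𝕜) : (K * ρ * Kᴴ).trace = (re (K * ρ * Kᴴ).trace : 𝕜) :=
  (re_eq_ofReal_of_isSelfAdjoint
    (IsSelfAdjoint.of_nonneg (hρ.mul_mul_conjTranspose_same K).trace_nonneg)).mp rfl

lemma PosSemidef.postMeasurement {ρ : Matrix n n 𝕜} (hρ : ρ.PosSemidef) (K : Matrix n n 𝕜) :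
    (postMeasurement K ρ).PosSemidef := by
  rw [Matrix.postMeasurement, hρ.trace_mul_mul_conjTranspose_eq_ofReal, ← ofReal_inv]
  exact (hρ.mul_mul_conjTranspose_same K).smul (ofReal_nonneg.mpr (inv_nonneg.mpr
    (nonneg_iff.mp (hρ.mul_mul_conjTranspose_same K).trace_nonneg).1))

variable [DecidableEq n]

lemma PosSemidef.sqrt_eq_cfcSqrt {A : Matrix n n 𝕜} (hA : A.PosSemidef) :
    hA.sqrt = CFC.sqrt A := by
  rw [CFC.sqrt_eq_cfc, cfc_nnreal_eq_real _ A, hA.1.cfc_eq]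
  simp only [IsHermitian.cfc, Unitary.conjStarAlgAut_apply, Real.coe_sqrt, Real.coe_toNNReal']
  have h : (ofReal ∘ (fun x => √(max x 0)) ∘ hA.1.eigenvalues : n → 𝕜)
      = (↑) ∘ (√·) ∘ hA.1.eigenvalues :=
    funext fun i => by simp [max_eq_left (hA.eigenvalues_nonneg i)]
  rw [h]; rfl

lemma PosSemidef.trace_mul_nonneg {A B : Matrix n n 𝕜} (hA : A.PosSemidef) (hB : B.PosSemidef) :
    0 ≤ (A * B).trace := by
  obtain ⟨C, rfl⟩ := CStarAlgebra.nonneg_iff_eq_star_mul_self.mp hB.nonneg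
  rw [← Matrix.mul_assoc, trace_mul_comm, ← Matrix.mul_assoc, star_eq_conjTranspose]
  exact (hA.mul_mul_conjTranspose_same C).trace_nonneg

lemma PosSemidef.re_trace_mul_le_re_trace_cfcSqrt_mul {A ρ : Matrix n n 𝕜} (hA : A.PosSemidef)
    (hA₁ : (1 - A).PosSemidef) (hρ : ρ.PosSemidef) :
    re (A * ρ).trace ≤ re (CFC.sqrt A * ρ).trace := by
  have h := (le_iff.mp (CFC.le_sqrt_of_le_one hA.nonneg (le_iff.mpr hA₁))).trace_mul_nonneg hρ
  rw [Matrix.sub_mul, trace_sub, nonneg_iff, map_sub, sub_nonneg] at h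
  exact h.1

lemma IsHermitian.exists_isStarProjection_trace_cfcAbs {A : Matrix n n 𝕜} (hA : A.IsHermitian) :
    ∃ P : Matrix n n 𝕜, IsStarProjection P ∧
      (CFC.abs A).trace = 2 * (P * A).trace - A.trace := by
  have hA' : IsSelfAdjoint A := hA
  have hcont (g : ℝ → ℝ) : ContinuousOn g (spectrum ℝ A) := (Set.toFinite _).continuousOn g
  let f : ℝ → ℝ := fun x => if 0 < x then 1 else 0
  refine ⟨cfc f A, ⟨?_, cfc_predicate f A⟩, ?_⟩
  · rw [IsIdempotentElem, ← cfc_mul f f A (hcont _) (hcont _)]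
    congr 1; ext x; by_cases hx : 0 < x <;> simp [f, hx]
  · have habs : CFC.abs A = cfc (fun x => 2 * (f x * x) - x) A := by
      rw [CFC.abs_eq_cfc_norm A]
      refine cfc_congr fun x _ => ?_
      by_cases hx : 0 < x
      · simp only [f, if_pos hx, Real.norm_of_nonneg hx.le]; ring
      · simp only [f, if_neg hx, Real.norm_of_nonpos (not_lt.mp hx)]; ring
    rw [habs, cfc_sub _ _ A (hcont _) (hcont _), cfc_const_mul _ _ A (hcont _),
      cfc_mul _ _ A (hcont _) (hcont _), cfc_id' ℝ A, trace_sub, trace_smul,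
      real_smul_eq_coe_mul, ofReal_ofNat]

lemma re_trace_mul_mul_conjTranspose_sub_le_sqrt {B C P : Matrix n n 𝕜}
    (hP : IsStarProjection P) (hB : re (B * Bᴴ).trace = 1) (hC : re (C * Cᴴ).trace = 1) :
    re (B * P * Bᴴ).trace - re (C * P * Cᴴ).trace ≤ √(1 - ‖(C * Bᴴ).trace‖ ^ 2) := by
  -- the Hilbert–Schmidt inner product `⟪B, C⟫ = tr (C Bᴴ)`, for which `B ↦ B P` is an
  -- orthogonal projection
  let := toMatrixSeminormedAddCommGroup (1 : Matrix n n 𝕜) PosSemidef.one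
  let := toMatrixInnerProductSpace (1 : Matrix n n 𝕜) PosSemidef.one
  have inner_eq (B C : Matrix n n 𝕜) : ⟪B, C⟫_𝕜 = (C * Bᴴ).trace :=
    (rfl : ⟪B, C⟫_𝕜 = (C * 1 * Bᴴ).trace).trans (by rw [Matrix.mul_one])
  have norm_sq_eq (B : Matrix n n 𝕜) : ‖B‖ ^ 2 = re (B * Bᴴ).trace := by
    rw [← inner_eq, inner_self_eq_norm_sq]
  have hPH : Pᴴ = P := hP.isSelfAdjoint
  have hT : (LinearMap.mulRight 𝕜 P).IsSymmetricProjection := by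
    refine ⟨?_, fun B C => ?_⟩
    · ext1 B; simp [Matrix.mul_assoc, hP.isIdempotentElem.eq]
    · simp only [LinearMap.mulRight_apply, inner_eq, conjTranspose_mul, hPH, Matrix.mul_assoc]
  have hsq (B : Matrix n n 𝕜) : ‖B * P‖ ^ 2 = re (B * P * Bᴴ).trace := by
    rw [norm_sq_eq, conjTranspose_mul, hPH, Matrix.mul_assoc, ← Matrix.mul_assoc P,
      hP.isIdempotentElem.eq, Matrix.mul_assoc]
  have hnorm (B : Matrix n n 𝕜) (hB : re (B * Bᴴ).trace = 1) : ‖B‖ = 1 := by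
    rw [← pow_eq_one_iff_of_nonneg (norm_nonneg B) two_ne_zero, norm_sq_eq, hB]
  have h := hT.norm_map_sq_sub_le_sqrt (hnorm B hB) (hnorm C hC)
  rwa [LinearMap.mulRight_apply, LinearMap.mulRight_apply, hsq, hsq, inner_eq] at h

lemma re_trace_mul_sub_postMeasurement_le {K ρ P : Matrix n n 𝕜} (hρ : ρ.PosSemidef)
    (hρtr : ρ.trace = 1) (hP : IsStarProjection P) (hK : 0 < re (K * ρ * Kᴴ).trace) :
    re (P * (ρ - postMeasurement K ρ)).trace ≤
      √(1 - ‖(Kᴴ * ρ).trace‖ ^ 2 / re (K * ρ * Kᴴ).trace) := by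
  set q := re (K * ρ * Kᴴ).trace
  set R := CFC.sqrt ρ
  have hRH : Rᴴ = R := (CFC.sqrt_nonneg ρ).isSelfAdjoint
  have hRR : R * R = ρ := CFC.sqrt_mul_sqrt_self ρ hρ.nonneg
  have hR (M : Matrix n n 𝕜) : (R * M * Rᴴ).trace = (M * ρ).trace := by
    rw [hRH, trace_mul_comm (R * M), ← Matrix.mul_assoc, hRR, trace_mul_comm]
  let c : ℝ := (√q)⁻¹
  have hcc : c * c = q⁻¹ := by rw [← mul_inv, Real.mul_self_sqrt hK.le]
  have hC (M : Matrix n n 𝕜) : (R * (c • K)ᴴ * M * (R * (c • K)ᴴ)ᴴ).trace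
      = q⁻¹ • (M * (K * ρ * Kᴴ)).trace := by
    rw [conjTranspose_mul, conjTranspose_conjTranspose,
      show R * (c • K)ᴴ * M * ((c • K) * Rᴴ) = R * ((c • K)ᴴ * M * (c • K)) * Rᴴ by
        simp only [Matrix.mul_assoc], hR, conjTranspose_smul, star_trivial]
    simp only [smul_mul_assoc, mul_smul_comm, smul_smul, trace_smul, hcc, Matrix.mul_assoc]
    rw [trace_mul_comm Kᴴ, Matrix.mul_assoc, Matrix.mul_assoc]
  have hRunit : re (R * Rᴴ).trace = 1 := by
    have h1 := hR 1
    rw [Matrix.mul_one, Matrix.one_mul, hρtr] at h1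
    rw [h1, one_re]
  have hCunit : re (R * (c • K)ᴴ * (R * (c • K)ᴴ)ᴴ).trace = 1 := by
    have h1 := hC 1
    rw [Matrix.mul_one, Matrix.one_mul] at h1
    rw [h1, smul_re, inv_mul_cancel₀ hK.ne']
  have hCR : (R * (c • K)ᴴ * Rᴴ).trace = c • (Kᴴ * ρ).trace := by
    rw [hR, conjTranspose_smul, star_trivial, smul_mul_assoc, trace_smul]
  have hσ : (P * postMeasurement K ρ).trace = q⁻¹ • (P * (K * ρ * Kᴴ)).trace := by
    rw [postMeasurement, hρ.trace_mul_mul_conjTranspose_eq_ofReal, ← ofReal_inv,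
      ← real_smul_eq_coe_smul, mul_smul_comm, trace_smul]
  have h := re_trace_mul_mul_conjTranspose_sub_le_sqrt hP hRunit hCunit
  rw [hR, hC, hCR, norm_smul, mul_pow, Real.norm_eq_abs, sq_abs, pow_two c, hcc, smul_re] at h
  rwa [Matrix.mul_sub, trace_sub, map_sub, hσ, smul_re, div_eq_inv_mul]

end Matrix

lemma traceDist_eq_re_trace_cfcAbs {d : ℕ} (ρ σ : Matrix (Fin d) (Fin d) ℂ) :
    traceDist ρ σ = (1 / 2) * (CFC.abs (ρ - σ)).trace.re := by
  rw [traceDist, PosSemidef.sqrt_eq_cfcSqrt]; rfl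

lemma exists_isStarProjection_traceDist_eq {d : ℕ} {ρ σ : Matrix (Fin d) (Fin d) ℂ}
    (hρσ : (ρ - σ).IsHermitian) (htr : ρ.trace = σ.trace) :
    ∃ P : Matrix (Fin d) (Fin d) ℂ, IsStarProjection P ∧
      traceDist ρ σ = (P * (ρ - σ)).trace.re := by
  obtain ⟨P, hP, habs⟩ := hρσ.exists_isStarProjection_trace_cfcAbs
  refine ⟨P, hP, ?_⟩
  rw [traceDist_eq_re_trace_cfcAbs, habs, trace_sub ρ σ, htr, sub_self, sub_zero,
    Complex.mul_re]
  norm_num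
  ring

theorem traceDist_postMeasurement_le {d : ℕ} {ρ K : Matrix (Fin d) (Fin d) ℂ}
    (hρ : ρ.PosSemidef) (hρtr : ρ.trace = 1) (hK : 0 < re (K * ρ * Kᴴ).trace) :
    traceDist ρ (postMeasurement K ρ) ≤ √(1 - ‖(Kᴴ * ρ).trace‖ ^ 2 / re (K * ρ * Kᴴ).trace) := by
  have hK₀ : (K * ρ * Kᴴ).trace ≠ 0 := fun h => by rw [h, map_zero] at hK; exact hK.false
  obtain ⟨P, hP, hdist⟩ := exists_isStarProjection_traceDist_eq
    (hρ.1.sub (hρ.postMeasurement K).1) (by rw [hρtr, trace_postMeasurement hK₀])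
  rw [hdist]
  exact re_trace_mul_sub_postMeasurement_le hρ hρtr hP hK

/-- Gentle measurement / almost-as-good-as-new lemma.
For a density matrix `ρ` and a measurement operator `0 ≤ Λ ≤ I` with `tr(Λρ) > 0`,
`‖ρ − √Λ ρ √Λ / tr(Λρ)‖_tr ≤ √(tr((I−Λ)ρ))`. -/
theorem stmt_2 {d : ℕ} (ρ Λ : Matrix (Fin d) (Fin d) ℂ)
    (hρ : ρ.PosSemidef) (hρtr : ρ.trace = 1)
    (hΛ : Λ.PosSemidef) (hΛI : ((1 : Matrix (Fin d) (Fin d) ℂ) - Λ).PosSemidef)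
    (hpos : 0 < ((Λ * ρ).trace).re) :
    traceDist ρ (((Λ * ρ).trace)⁻¹ • (hΛ.sqrt * ρ * hΛ.sqrt)) ≤
      Real.sqrt (((((1 : Matrix (Fin d) (Fin d) ℂ) - Λ) * ρ).trace).re) := by
  rw [hΛ.sqrt_eq_cfcSqrt]
  set X := CFC.sqrt Λ
  have hXH : Xᴴ = X := (CFC.sqrt_nonneg Λ).isSelfAdjoint
  have htr : (Λ * ρ).trace = (X * ρ * Xᴴ).trace := by
    rw [hXH, trace_mul_cycle, CFC.sqrt_mul_sqrt_self Λ hΛ.nonneg]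
  have hσ : (X * ρ * Xᴴ).trace⁻¹ • (X * ρ * X) = postMeasurement X ρ := by
    rw [postMeasurement, hXH]
  rw [htr, hσ]
  refine (traceDist_postMeasurement_le hρ hρtr (htr ▸ hpos)).trans (Real.sqrt_le_sqrt ?_)
  have hgentle : (Λ * ρ).trace.re ≤ ‖(Xᴴ * ρ).trace‖ := by
    rw [hXH]
    exact (hΛ.re_trace_mul_le_re_trace_cfcSqrt_mul hΛI hρ).trans (re_le_norm _)
  rw [← htr, re_to_complex, Matrix.sub_mul, Matrix.one_mul, trace_sub, hρtr, Complex.sub_re,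
    Complex.one_re]
  have : (Λ * ρ).trace.re ≤ ‖(Xᴴ * ρ).trace‖ ^ 2 / (Λ * ρ).trace.re := by
    rw [le_div_iff₀ hpos]; nlinarith
  linarith
end

section
/- (Quantum union bound.) Let ρ be a density matrix on ℂ^d and let Λ_1, …, Λ_T be orthogonal projections on ℂ^d such that tr(Λ_t ρ) ≤ ε for every t. Then, applying the two-outcome projective measurements {Λ_t, I−Λ_t} in sequence to ρ, the probability that at least one measurement yields the outcome associated with Λ_t satisfies 1 − tr( M ρ Mᴴ ) ≤ 4Tε, where M := (I−Λ_T)(I−Λ_{T−1})···(I−Λ_1). -/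
/-!
Give matrices the semi-inner product `⟪x, y⟫ = tr (y ρ xᴴ)`. Left multiplications by the `Λ_t`
become orthogonal projections `P_t`, and `‖1‖² = tr ρ = 1`, `‖Λ_t‖² = tr (Λ_t ρ) ≤ ε`,
`‖M‖² = tr (M ρ Mᴴ)`, so it suffices to treat a unit vector `v` of an inner product space.

There the vectors `w_n = (1 - P_n) ⋯ (1 - P_1) v` descend by orthogonal steps
`x_n = P_n w_n = w_n - w_{n+1}`, so `a := 1 - ‖w_T‖² = ∑ ‖x_n‖²`. On the other hand
`a ≤ 2 re ⟪v, v - w_T⟫ = 2 ∑ re ⟪P_n v, x_n⟫ ≤ 2 √ε ∑ ‖x_n‖ ≤ 2 √(ε T a)` by Cauchy–Schwarz,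
and squaring gives `a ≤ 4 T ε`.
-/

open Finset Matrix RCLike
open scoped ComplexOrder InnerProductSpace

section InnerProductSpace

variable {𝕜 E : Type*} [RCLike 𝕜] [SeminormedAddCommGroup E] [InnerProductSpace 𝕜 E]

theorem one_sub_norm_sq_le_of_orthogonal_steps {T : ℕ} {w : ℕ → E} {c : ℝ} (hw₀ : ‖w 0‖ = 1)
    (horth : ∀ n < T, ⟪w n - w (n + 1), w (n + 1)⟫_𝕜 = 0)
    (hstep : ∀ n < T, re ⟪w 0, w n - w (n + 1)⟫_𝕜 ≤ c * ‖w n - w (n + 1)‖) :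
    1 - ‖w T‖ ^ 2 ≤ 4 * T * c ^ 2 := by
  set a := 1 - ‖w T‖ ^ 2
  set s := ∑ n ∈ range T, ‖w n - w (n + 1)‖
  have ha : ∑ n ∈ range T, ‖w n - w (n + 1)‖ ^ 2 = a := by
    rw [show a = ‖w 0‖ ^ 2 - ‖w T‖ ^ 2 by rw [hw₀, one_pow],
      ← sum_range_sub' (fun n ↦ ‖w n‖ ^ 2)]
    refine sum_congr rfl fun n hn ↦ ?_
    have hpyth :=
      norm_add_sq_eq_norm_sq_add_norm_sq_of_inner_eq_zero _ _ (horth n (mem_range.1 hn))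
    rw [sub_add_cancel] at hpyth
    linarith
  have ha₀ : 0 ≤ a := ha ▸ sum_nonneg fun _ _ ↦ sq_nonneg _
  -- `1 - ‖u‖² + ‖v - u‖² = 2 (1 - re ⟪v, u⟫)` for a unit vector `v`
  have hdist := norm_sub_sq (𝕜 := 𝕜) (w 0) (w T)
  have has : a ≤ 2 * (c * s) := calc
    a ≤ 2 * (1 - re ⟪w 0, w T⟫_𝕜) := by nlinarith [norm_nonneg (w 0 - w T)]
    _ = 2 * ∑ n ∈ range T, re ⟪w 0, w n - w (n + 1)⟫_𝕜 := by
      simp_rw [inner_sub_right, map_sub]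
      rw [sum_range_sub' (fun n ↦ re ⟪w 0, w n⟫_𝕜), inner_self_eq_norm_sq, hw₀, one_pow]
    _ ≤ 2 * (c * s) := by
      gcongr
      rw [mul_sum]
      exact sum_le_sum fun n hn ↦ hstep n (mem_range.1 hn)
  have hs : s ^ 2 ≤ T * a := by
    simpa [ha] using sq_sum_le_card_mul_sum_sq (s := range T) (f := fun n ↦ ‖w n - w (n + 1)‖)
  have hsq : a * a ≤ 4 * T * c ^ 2 * a := calc
    a * a ≤ (2 * (c * s)) ^ 2 := by nlinarith
    _ = 4 * c ^ 2 * s ^ 2 := by ring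
    _ ≤ 4 * c ^ 2 * (T * a) := by gcongr
    _ = 4 * T * c ^ 2 * a := by ring
  rcases ha₀.eq_or_lt with h | h
  · rw [← h]; positivity
  · exact le_of_mul_le_mul_right hsq h

namespace LinearMap.IsSymmetricProjection

variable {p : E →ₗ[𝕜] E}

theorem inner_map_map_s18 (hp : p.IsSymmetricProjection) (x y : E) :
    ⟪p x, p y⟫_𝕜 = ⟪x, p y⟫_𝕜 := by
  rw [hp.isSymmetric, ← Module.End.mul_apply, hp.isIdempotentElem.eq]

theorem inner_map_sub_map_self (hp : p.IsSymmetricProjection) (x : E) :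
    ⟪p x, x - p x⟫_𝕜 = 0 := by
  rw [inner_sub_right, hp.inner_map_map_s18, hp.isSymmetric, sub_self]

end LinearMap.IsSymmetricProjection

theorem List.prod_reverse_take_add_one_ofFn {M : Type*} [Monoid M] {T : ℕ} (f : Fin T → M)
    {n : ℕ} (hn : n < T) :
    ((List.ofFn f).take (n + 1)).reverse.prod =
      f ⟨n, hn⟩ * ((List.ofFn f).take n).reverse.prod := by
  simp [List.take_add_one, hn]

theorem one_sub_norm_sq_prod_one_sub_apply_le {T : ℕ} (P : Fin T → E →ₗ[𝕜] E)
    (hP : ∀ t, (P t).IsSymmetricProjection) {v : E} (hv : ‖v‖ = 1) {ε : ℝ}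
    (hε : ∀ t, ‖P t v‖ ^ 2 ≤ ε) :
    1 - ‖(List.ofFn fun t ↦ 1 - P t).reverse.prod v‖ ^ 2 ≤ 4 * T * ε := by
  set w : ℕ → E := fun n ↦ ((List.ofFn fun t ↦ 1 - P t).take n).reverse.prod v
  have hw_succ (n : ℕ) (hn : n < T) : w (n + 1) = w n - P ⟨n, hn⟩ (w n) := by
    simp [w, List.prod_reverse_take_add_one_ofFn _ hn]
  have hwT : w T = (List.ofFn fun t ↦ 1 - P t).reverse.prod v := by
    simp [w, List.take_of_length_le]
  have hsqrt : (T : ℝ) * √ε ^ 2 = T * ε := by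
    rcases T with _ | T
    · simp
    · rw [Real.sq_sqrt ((sq_nonneg _).trans (hε 0))]
  rw [← hwT, mul_assoc, ← hsqrt, ← mul_assoc]
  refine one_sub_norm_sq_le_of_orthogonal_steps (𝕜 := 𝕜) (by simpa [w] using hv)
    (fun n hn ↦ ?_) (fun n hn ↦ ?_)
  · rw [hw_succ n hn, sub_sub_cancel, (hP _).inner_map_sub_map_self]
  · have hPv : ‖P ⟨n, hn⟩ v‖ ≤ √ε := Real.le_sqrt_of_sq_le (hε _)
    rw [hw_succ n hn, sub_sub_cancel, show w 0 = v by simp [w], ← (hP _).inner_map_map_s18]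
    exact (re_inner_le_norm _ _).trans (by gcongr)

end InnerProductSpace

namespace Matrix

variable {𝕜 n : Type*} [RCLike 𝕜] [Fintype n] {ρ : Matrix n n 𝕜}

theorem norm_sq_eq_re_trace (hρ : ρ.PosSemidef) (x : Matrix n n 𝕜) :
    letI := ρ.toMatrixSeminormedAddCommGroup hρ
    letI := ρ.toMatrixInnerProductSpace hρ
    ‖x‖ ^ 2 = re (x * ρ * xᴴ).trace :=
  letI := ρ.toMatrixSeminormedAddCommGroup hρ
  letI := ρ.toMatrixInnerProductSpace hρ
  (inner_self_eq_norm_sq (𝕜 := 𝕜) x).symm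

theorem isSymmetricProjection_mulLeft (hρ : ρ.PosSemidef) {Λ : Matrix n n 𝕜}
    (hΛ : IsStarProjection Λ) :
    letI := ρ.toMatrixSeminormedAddCommGroup hρ
    letI := ρ.toMatrixInnerProductSpace hρ
    (LinearMap.mulLeft 𝕜 Λ).IsSymmetricProjection := by
  let := ρ.toMatrixSeminormedAddCommGroup hρ
  let := ρ.toMatrixInnerProductSpace hρ
  refine ⟨LinearMap.ext fun x ↦ ?_, fun x y ↦ ?_⟩
  · simp [← mul_assoc, hΛ.isIdempotentElem.eq]
  · change (y * ρ * (Λ * x)ᴴ).trace = (Λ * y * ρ * xᴴ).trace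
    rw [conjTranspose_mul, ← star_eq_conjTranspose Λ, hΛ.isSelfAdjoint.star_eq, ← mul_assoc,
      trace_mul_comm, ← mul_assoc, ← mul_assoc]

end Matrix

/-- Quantum union bound, Gao. If each projector `Λ_t` accepts the density
matrix `ρ` with probability at most `ε`, then performing the measurements
`{Λ_1, I−Λ_1}, …, {Λ_T, I−Λ_T}` in sequence, the probability that at least one yields the
outcome `Λ_t`, namely `1 − tr(MρMᴴ)` with `M = (I−Λ_T)···(I−Λ_1)`, is at most `4Tε`. -/
theorem stmt_18 {d T : ℕ} (ρ : Matrix (Fin d) (Fin d) ℂ)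
    (hρ : ρ.PosSemidef) (hρtr : ρ.trace = 1)
    (Λ : Fin T → Matrix (Fin d) (Fin d) ℂ)
    (hΛH : ∀ t, (Λ t).IsHermitian) (hΛ2 : ∀ t, Λ t * Λ t = Λ t)
    (ε : ℝ) (hε : ∀ t, ((Λ t * ρ).trace).re ≤ ε)
    (M : Matrix (Fin d) (Fin d) ℂ)
    (hM : M = ((List.ofFn fun t : Fin T => (1 : Matrix (Fin d) (Fin d) ℂ) - Λ t).reverse).prod) :
    1 - ((M * ρ * Mᴴ).trace).re ≤ 4 * T * ε := by
  let := ρ.toMatrixSeminormedAddCommGroup hρ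
  let := ρ.toMatrixInnerProductSpace hρ
  have hΛ (t : Fin T) : IsStarProjection (Λ t) := ⟨hΛ2 t, hΛH t⟩
  have hM' : (List.ofFn fun t ↦ 1 - LinearMap.mulLeft ℂ (Λ t)).reverse.prod 1 = M := by
    have hprod := map_list_prod (Algebra.lmul ℂ (Matrix (Fin d) (Fin d) ℂ))
      (List.ofFn fun t ↦ 1 - Λ t).reverse
    simp only [List.map_reverse, List.map_ofFn, Function.comp_def, map_sub, map_one] at hprod
    rw [← hM] at hprod
    exact congr($hprod 1).symm.trans (mul_one M)
  have key := one_sub_norm_sq_prod_one_sub_apply_le (fun t ↦ LinearMap.mulLeft ℂ (Λ t))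
    (fun t ↦ isSymmetricProjection_mulLeft hρ (hΛ t)) (v := 1)
    ((pow_eq_one_iff_of_nonneg (norm_nonneg _) two_ne_zero).mp
      (by rw [norm_sq_eq_re_trace]; simp [hρtr]))
    (fun t ↦ by
      rw [norm_sq_eq_re_trace, LinearMap.mulLeft_apply, mul_one, ← star_eq_conjTranspose,
        (hΛ t).isSelfAdjoint.star_eq, trace_mul_cycle, (hΛ t).isIdempotentElem.eq]
      exact hε t)
  rwa [hM', norm_sq_eq_re_trace] at key
end
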